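/- Let Ω, ∂Ω, σ, n be as in the context. Let φ : ℝ^d → ℝ be C² on a neighborhood of the closure of Ω, satisfying −Δφ = E·φ on Ω and ∫_Ω φ(x)² dx = 1, and satisfying Dirichlet boundary conditions: φ = 0 on ∂Ω and the gradient of φ is normal on the boundary, i.e. ∇φ(x) = ⟨n(x),∇φ(x)⟩·n(x) for all x ∈ ∂Ω. Then ∫_{∂Ω} ⟨x,n(x)⟩·⟨n(x),∇φ(x)⟩² dσ(x) = 2E. -/

import Mathlib

open MeasureTheory
open scoped RealInnerProductSpace Classical

noncomputable section

/-- The Euclidean Laplacian: the sum of the second partial derivatives. -/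
def lap {d : ℕ} (u : EuclideanSpace ℝ (Fin d) → ℝ) (x : EuclideanSpace ℝ (Fin d)) : ℝ :=
  ∑ i, fderiv ℝ (fun y => fderiv ℝ u y (EuclideanSpace.single i (1:ℝ))) x
    (EuclideanSpace.single i (1:ℝ))

/-- The divergence: the sum of the partial derivatives of the components. -/
def divg {d : ℕ} (F : EuclideanSpace ℝ (Fin d) → EuclideanSpace ℝ (Fin d))
    (x : EuclideanSpace ℝ (Fin d)) : ℝ :=
  ∑ i, fderiv ℝ (fun y => ⟪F y, EuclideanSpace.single i (1:ℝ)⟫) x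
    (EuclideanSpace.single i (1:ℝ))

/-! Rellich's identity. Gauss–Green applied to `φ ∇φ` gives `∫ ‖∇φ‖² = E` and applied to `φ² x`
gives `∫ φ ⟪∇φ, x⟫ = -d/2`, the boundary terms vanishing with `φ`. The Rellich field
`R = 2 ⟪∇φ, x⟫ ∇φ - ‖∇φ‖² x` has divergence `(2 - d) ‖∇φ‖² + 2 ⟪∇φ, x⟫ Δφ`, whose integral is
therefore `(2 - d) E + d E = 2 E`; on the boundary, where `∇φ` is normal, `⟪R, n⟫` is exactly
`⟪x, n⟫ ⟪n, ∇φ⟫²`. -/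

open InnerProductSpace Bornology
open scoped Gradient

theorem ContinuousOn.integrableOn_of_closure_subset {X F : Type*} [MeasurableSpace X]
    [MetricSpace X] [ProperSpace X] [OpensMeasurableSpace X] [NormedAddCommGroup F]
    {μ : Measure X} [IsFiniteMeasureOnCompacts μ] {f : X → F} {s U : Set X}
    (hf : ContinuousOn f U) (hs : IsBounded s) (hsU : closure s ⊆ U) : IntegrableOn f s μ :=
  ((hf.mono hsU).integrableOn_compact hs.isCompact_closure).mono_set subset_closure

section Gradient

variable {F : Type*} [NormedAddCommGroup F] [InnerProductSpace ℝ F] [CompleteSpace F]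
  {φ : F → ℝ} {x : F} {U : Set F} {m n : WithTop ℕ∞}

theorem ContDiffAt.gradient (hφ : ContDiffAt ℝ n φ x) (hmn : m + 1 ≤ n) :
    ContDiffAt ℝ m (∇ φ) x :=
  (toDual ℝ F).symm.contDiff.contDiffAt.comp x (hφ.fderiv_right hmn)

theorem ContDiffOn.gradient_of_isOpen (hφ : ContDiffOn ℝ n φ U) (hU : IsOpen U)
    (hmn : m + 1 ≤ n) : ContDiffOn ℝ m (∇ φ) U :=
  (toDual ℝ F).symm.contDiff.comp_contDiffOn (hφ.fderiv_of_isOpen hU hmn)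

theorem inner_fderiv_gradient_apply (v w : F) :
    ⟪fderiv ℝ (∇ φ) x v, w⟫ = fderiv ℝ (fderiv ℝ φ) x v w := by
  rw [show ∇ φ = (toDual ℝ F).symm ∘ fderiv ℝ φ from rfl, LinearIsometryEquiv.comp_fderiv]
  exact toDual_symm_apply

theorem ContDiffAt.inner_fderiv_gradient_comm (hφ : ContDiffAt ℝ 2 φ x) (v w : F) :
    ⟪fderiv ℝ (∇ φ) x v, w⟫ = ⟪fderiv ℝ (∇ φ) x w, v⟫ := by
  simp only [inner_fderiv_gradient_apply]
  exact hφ.isSymmSndFDerivAt (by simp) v w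

end Gradient

section Divergence

variable {d : ℕ} {F G : EuclideanSpace ℝ (Fin d) → EuclideanSpace ℝ (Fin d)}
  {f : EuclideanSpace ℝ (Fin d) → ℝ} {x : EuclideanSpace ℝ (Fin d)}

theorem divg_eq_trace_fderiv (hG : DifferentiableAt ℝ G x) :
    divg G x = LinearMap.trace ℝ (EuclideanSpace ℝ (Fin d)) (fderiv ℝ G x :
      EuclideanSpace ℝ (Fin d) →ₗ[ℝ] EuclideanSpace ℝ (Fin d)) := by
  rw [LinearMap.trace_eq_sum_inner _ (EuclideanSpace.basisFun (Fin d) ℝ)]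
  refine Finset.sum_congr rfl fun i _ => ?_
  rw [fderiv_inner_apply ℝ hG (differentiableAt_const _)]
  simp [real_inner_comm]

theorem divg_sub (hF : DifferentiableAt ℝ F x) (hG : DifferentiableAt ℝ G x) :
    divg (fun y => F y - G y) x = divg F x - divg G x := by
  rw [divg_eq_trace_fderiv (hF.fun_sub hG), divg_eq_trace_fderiv hF, divg_eq_trace_fderiv hG,
    fderiv_fun_sub hF hG, ContinuousLinearMap.toLinearMap_sub, map_sub]

theorem divg_smul (hf : DifferentiableAt ℝ f x) (hG : DifferentiableAt ℝ G x) :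
    divg (fun y => f y • G y) x = fderiv ℝ f x (G x) + f x * divg G x := by
  rw [divg_eq_trace_fderiv (hf.fun_smul hG), divg_eq_trace_fderiv hG, fderiv_fun_smul hf hG,
    ContinuousLinearMap.toLinearMap_add, map_add, ContinuousLinearMap.toLinearMap_smul, map_smul,
    ContinuousLinearMap.coe_smulRight, LinearMap.trace_smulRight, smul_eq_mul, add_comm]
  rfl

theorem divg_id : divg (fun y => y) x = d := by
  rw [divg_eq_trace_fderiv differentiableAt_fun_id, fderiv_fun_id, ContinuousLinearMap.coe_id,
    LinearMap.trace_id, finrank_euclideanSpace_fin]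

theorem divg_gradient (φ : EuclideanSpace ℝ (Fin d) → ℝ) : divg (∇ φ) = lap φ := by
  funext x
  simp only [divg, lap, inner_gradient_left]

end Divergence

section Rellich

variable {F : Type*} [NormedAddCommGroup F] [InnerProductSpace ℝ F] [CompleteSpace F]
  {φ : F → ℝ} {x ν : F}

def rellichField (φ : F → ℝ) (y : F) : F :=
  (2 * ⟪∇ φ y, y⟫) • ∇ φ y - ‖∇ φ y‖ ^ 2 • y

theorem ContDiffOn.rellichField {U : Set F} {n : WithTop ℕ∞} (hφ : ContDiffOn ℝ (n + 1) φ U)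
    (hU : IsOpen U) : ContDiffOn ℝ n (rellichField φ) U :=
  have hg : ContDiffOn ℝ n (∇ φ) U := hφ.gradient_of_isOpen hU le_rfl
  (((hg.inner ℝ contDiffOn_id).const_smul (2 : ℝ)).smul hg).sub ((hg.norm_sq ℝ).smul contDiffOn_id)

theorem inner_rellichField_of_gradient_eq_smul (h : ∇ φ x = ⟪ν, ∇ φ x⟫ • ν) :
    ⟪rellichField φ x, ν⟫ = ⟪x, ν⟫ * ⟪ν, ∇ φ x⟫ ^ 2 := by
  have hnormal : ⟪∇ φ x, ν⟫ = ⟪ν, ∇ φ x⟫ := real_inner_comm _ _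
  have hradial : ⟪∇ φ x, x⟫ = ⟪ν, ∇ φ x⟫ * ⟪x, ν⟫ := by
    conv_lhs => rw [h]
    rw [real_inner_smul_left, real_inner_comm x ν]
  have hnorm : ‖∇ φ x‖ ^ 2 = ⟪ν, ∇ φ x⟫ ^ 2 := by
    rw [← real_inner_self_eq_norm_sq]
    nth_rewrite 1 [h]
    rw [real_inner_smul_left, sq]
  rw [rellichField, inner_sub_left, real_inner_smul_left, real_inner_smul_left, hnormal,
    hradial, hnorm]
  ring

end Rellich

section PointwiseIdentities

variable {d : ℕ} {φ : EuclideanSpace ℝ (Fin d) → ℝ} {x : EuclideanSpace ℝ (Fin d)}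

theorem divg_smul_gradient_self (hφ : ContDiffAt ℝ 2 φ x) :
    divg (fun y => φ y • ∇ φ y) x = ‖∇ φ x‖ ^ 2 + φ x * lap φ x := by
  rw [divg_smul (hφ.differentiableAt two_ne_zero)
    ((hφ.gradient (m := 1) le_rfl).differentiableAt one_ne_zero), divg_gradient,
    ← inner_gradient_left, real_inner_self_eq_norm_sq]

theorem divg_sq_smul_id (hφ : DifferentiableAt ℝ φ x) :
    divg (fun y => φ y ^ 2 • y) x = 2 * φ x * ⟪∇ φ x, x⟫ + d * φ x ^ 2 := by
  rw [divg_smul (hφ.fun_pow 2) differentiableAt_fun_id, divg_id, fderiv_fun_pow 2 hφ,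
    smul_apply, inner_gradient_left]
  simp only [nsmul_eq_mul, smul_eq_mul]
  ring

theorem divg_rellichField (hφ : ContDiffAt ℝ 2 φ x) :
    divg (rellichField φ) x = (2 - d) * ‖∇ φ x‖ ^ 2 + 2 * ⟪∇ φ x, x⟫ * lap φ x := by
  have hg : DifferentiableAt ℝ (∇ φ) x :=
    (hφ.gradient (m := 1) le_rfl).differentiableAt one_ne_zero
  have hradial : DifferentiableAt ℝ (fun y => ⟪∇ φ y, y⟫) x := hg.inner ℝ differentiableAt_fun_id
  have henergy : DifferentiableAt ℝ (fun y => ‖∇ φ y‖ ^ 2) x := hg.norm_sq ℝ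
  unfold rellichField
  rw [divg_sub ((hradial.const_mul 2).fun_smul hg) (henergy.fun_smul differentiableAt_fun_id),
    divg_smul (hradial.const_mul 2) hg, divg_smul henergy differentiableAt_fun_id, divg_id,
    divg_gradient, fderiv_const_mul hradial, smul_apply,
    fderiv_inner_apply ℝ hg differentiableAt_fun_id, (hg.hasFDerivAt.norm_sq).fderiv,
    fderiv_fun_id, ContinuousLinearMap.id_apply, real_inner_self_eq_norm_sq,
    -- the two Hessian terms cancel by the symmetry of the second derivative
    hφ.inner_fderiv_gradient_comm (∇ φ x) x]
  simp only [smul_apply, ContinuousLinearMap.comp_apply, innerSL_apply_apply, smul_eq_mul,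
    nsmul_eq_mul, real_inner_comm (∇ φ x)]
  ring

end PointwiseIdentities

section IntegralIdentities

variable {d : ℕ} {Ω U : Set (EuclideanSpace ℝ (Fin d))} {μ : Measure (EuclideanSpace ℝ (Fin d))}
  {n : EuclideanSpace ℝ (Fin d) → EuclideanSpace ℝ (Fin d)} {φ : EuclideanSpace ℝ (Fin d) → ℝ}
  {En : ℝ}

theorem setIntegral_norm_sq_gradient_eq (hΩo : IsOpen Ω) (hΩb : IsBounded Ω) (hU : IsOpen U)
    (hΩU : closure Ω ⊆ U) (hφ : ContDiffOn ℝ 2 φ U)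
    (hGG : ∀ F, ContDiffOn ℝ 1 F U → ∫ x in Ω, divg F x = ∫ x in frontier Ω, ⟪F x, n x⟫ ∂μ)
    (hHφ : ∀ x ∈ Ω, -lap φ x = En * φ x) (hφnorm : ∫ x in Ω, φ x ^ 2 = 1)
    (hφ0 : ∀ x ∈ frontier Ω, φ x = 0) :
    ∫ x in Ω, ‖∇ φ x‖ ^ 2 = En := by
  have hφ1 : ContDiffOn ℝ 1 φ U := hφ.of_le one_le_two
  have hg : ContDiffOn ℝ 1 (∇ φ) U := hφ.gradient_of_isOpen hU (by norm_num)
  have h : ∫ x in Ω, (‖∇ φ x‖ ^ 2 - En * φ x ^ 2) = 0 :=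
    calc _ = ∫ x in Ω, divg (fun y => φ y • ∇ φ y) x :=
          setIntegral_congr_fun hΩo.measurableSet fun x hx => by
            rw [divg_smul_gradient_self (hφ.contDiffAt (hU.mem_nhds (hΩU (subset_closure hx)))),
              ← neg_neg (lap φ x), hHφ x hx]
            ring
      _ = 0 := by
          rw [hGG (fun y => φ y • ∇ φ y) (hφ1.smul hg)]
          exact setIntegral_eq_zero_of_forall_eq_zero fun x hx => by
            rw [real_inner_smul_left, hφ0 x hx, zero_mul]
  rw [integral_sub ((hg.norm_sq ℝ).continuousOn.integrableOn_of_closure_subset hΩb hΩU)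
      (((hφ1.pow 2).continuousOn.integrableOn_of_closure_subset hΩb hΩU).const_mul En),
    integral_const_mul, hφnorm] at h
  linarith

theorem setIntegral_mul_inner_gradient_self_eq (hΩo : IsOpen Ω) (hΩb : IsBounded Ω)
    (hU : IsOpen U) (hΩU : closure Ω ⊆ U) (hφ : ContDiffOn ℝ 2 φ U)
    (hGG : ∀ F, ContDiffOn ℝ 1 F U → ∫ x in Ω, divg F x = ∫ x in frontier Ω, ⟪F x, n x⟫ ∂μ)
    (hφnorm : ∫ x in Ω, φ x ^ 2 = 1) (hφ0 : ∀ x ∈ frontier Ω, φ x = 0) :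
    ∫ x in Ω, φ x * ⟪∇ φ x, x⟫ = -(d / 2) := by
  have hφ1 : ContDiffOn ℝ 1 φ U := hφ.of_le one_le_two
  have hg : ContDiffOn ℝ 1 (∇ φ) U := hφ.gradient_of_isOpen hU (by norm_num)
  have h : ∫ x in Ω, (2 * (φ x * ⟪∇ φ x, x⟫) + d * φ x ^ 2) = 0 :=
    calc _ = ∫ x in Ω, divg (fun y => φ y ^ 2 • y) x :=
          setIntegral_congr_fun hΩo.measurableSet fun x hx => by
            rw [divg_sq_smul_id ((hφ1.differentiableOn one_ne_zero).differentiableAt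
              (hU.mem_nhds (hΩU (subset_closure hx))))]
            ring
      _ = 0 := by
          rw [hGG (fun y => φ y ^ 2 • y) ((hφ1.pow 2).smul contDiffOn_id)]
          exact setIntegral_eq_zero_of_forall_eq_zero fun x hx => by
            rw [real_inner_smul_left, hφ0 x hx, zero_pow two_ne_zero, zero_mul]
  rw [integral_add ((ContinuousOn.integrableOn_of_closure_subset
        (f := fun x => φ x * ⟪∇ φ x, x⟫) (hφ1.continuousOn.mul
          (hg.continuousOn.inner continuousOn_id)) hΩb hΩU).const_mul 2)
      (((hφ1.pow 2).continuousOn.integrableOn_of_closure_subset hΩb hΩU).const_mul _),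
    integral_const_mul, integral_const_mul, hφnorm] at h
  linarith

end IntegralIdentities

theorem dirichlet_boundary_normalization_general
    (d : ℕ) (Ω : Set (EuclideanSpace ℝ (Fin d)))
    (hΩo : IsOpen Ω) (hΩb : Bornology.IsBounded Ω)
    (n : EuclideanSpace ℝ (Fin d) → EuclideanSpace ℝ (Fin d))
    (hGG : ∀ F : EuclideanSpace ℝ (Fin d) → EuclideanSpace ℝ (Fin d),
      (∃ U, IsOpen U ∧ closure Ω ⊆ U ∧ ContDiffOn ℝ 1 F U) →
      (∫ x in Ω, divg F x) = ∫ x in frontier Ω, ⟪F x, n x⟫ ∂(μH[(d:ℝ) - 1]))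
    (φ : EuclideanSpace ℝ (Fin d) → ℝ) (En : ℝ)
    (hφr : ∃ U, IsOpen U ∧ closure Ω ⊆ U ∧ ContDiffOn ℝ 2 φ U)
    (hHφ : ∀ x ∈ Ω, -lap φ x = En * φ x)
    (hφnorm : (∫ x in Ω, (φ x) ^ 2) = 1)
    (hφ0 : ∀ x ∈ frontier Ω, φ x = 0)
    (hφn : ∀ x ∈ frontier Ω, gradient φ x = ⟪n x, gradient φ x⟫ • n x) :
    (∫ x in frontier Ω,
        ⟪x, n x⟫ * ⟪n x, gradient φ x⟫ ^ 2 ∂(μH[(d:ℝ) - 1])) = 2 * En := by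
  obtain ⟨U, hU, hΩU, hφ⟩ := hφr
  have hGU : ∀ F, ContDiffOn ℝ 1 F U →
      ∫ x in Ω, divg F x = ∫ x in frontier Ω, ⟪F x, n x⟫ ∂(μH[(d:ℝ) - 1]) :=
    fun F hF => hGG F ⟨U, hU, hΩU, hF⟩
  have hg : ContDiffOn ℝ 1 (∇ φ) U := hφ.gradient_of_isOpen hU (by norm_num)
  calc ∫ x in frontier Ω, ⟪x, n x⟫ * ⟪n x, ∇ φ x⟫ ^ 2 ∂(μH[(d:ℝ) - 1])
      = ∫ x in frontier Ω, ⟪rellichField φ x, n x⟫ ∂(μH[(d:ℝ) - 1]) :=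
        setIntegral_congr_fun isClosed_frontier.measurableSet fun x hx =>
          (inner_rellichField_of_gradient_eq_smul (hφn x hx)).symm
    _ = ∫ x in Ω, ((2 - d) * ‖∇ φ x‖ ^ 2 - 2 * En * (φ x * ⟪∇ φ x, x⟫)) := by
        rw [← hGU _ (hφ.rellichField hU)]
        refine setIntegral_congr_fun hΩo.measurableSet fun x hx => ?_
        rw [divg_rellichField (hφ.contDiffAt (hU.mem_nhds (hΩU (subset_closure hx)))),
          ← neg_neg (lap φ x), hHφ x hx]
        ring
    _ = 2 * En := by
        rw [integral_sub
            (((hg.norm_sq ℝ).continuousOn.integrableOn_of_closure_subset hΩb hΩU).const_mul _)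
            ((ContinuousOn.integrableOn_of_closure_subset (f := fun x => φ x * ⟪∇ φ x, x⟫)
              (hφ.continuousOn.mul (hg.continuousOn.inner continuousOn_id)) hΩb hΩU).const_mul _),
          integral_const_mul, integral_const_mul,
          setIntegral_norm_sq_gradient_eq hΩo hΩb hU hΩU hφ hGU hHφ hφnorm hφ0,
          setIntegral_mul_inner_gradient_self_eq hΩo hΩb hU hΩU hφ hGU hφnorm hφ0]
        ring

theorem dirichlet_boundary_normalization
    (d : ℕ) (hd : 2 ≤ d) (Ω : Set (EuclideanSpace ℝ (Fin d)))
    (hΩo : IsOpen Ω) (hΩb : Bornology.IsBounded Ω)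
    (n : EuclideanSpace ℝ (Fin d) → EuclideanSpace ℝ (Fin d))
    (hGG : ∀ F : EuclideanSpace ℝ (Fin d) → EuclideanSpace ℝ (Fin d),
      (∃ U, IsOpen U ∧ closure Ω ⊆ U ∧ ContDiffOn ℝ 1 F U) →
      (∫ x in Ω, divg F x) = ∫ x in frontier Ω, ⟪F x, n x⟫ ∂(μH[(d:ℝ) - 1]))
    (φ : EuclideanSpace ℝ (Fin d) → ℝ) (En : ℝ)
    (hφr : ∃ U, IsOpen U ∧ closure Ω ⊆ U ∧ ContDiffOn ℝ 2 φ U)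
    (hHφ : ∀ x ∈ Ω, -lap φ x = En * φ x)
    (hφnorm : (∫ x in Ω, (φ x) ^ 2) = 1)
    (hφ0 : ∀ x ∈ frontier Ω, φ x = 0)
    (hφn : ∀ x ∈ frontier Ω, gradient φ x = ⟪n x, gradient φ x⟫ • n x) :
    (∫ x in frontier Ω,
        ⟪x, n x⟫ * ⟪n x, gradient φ x⟫ ^ 2 ∂(μH[(d:ℝ) - 1])) = 2 * En :=
  dirichlet_boundary_normalization_general d Ω hΩo hΩb n hGG φ En hφr hHφ hφnorm hφ0 hφn
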